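/- Let f, a be smooth solutions on (0,∞) of -f'' - f'/r + n²(1-a)²f/r² + (λ/2)(f²-1)f = 0 and -a'' + a'/r - f²(1-a) = 0 with 0 < f < 1, 0 < a < 1, f' > 0, a' > 0, and suppose e(r) := f'(r) - n(1-a(r))f(r)/r tends to 0 as r → 0 and as r → ∞. If λ < 1 then e(r) > 0 for all r > 0, and if λ > 1 then e(r) < 0 for all r > 0. -/

import Mathlib

open Set Filter

open Topology

noncomputable def G0fn (N lam : ℝ) (f a : ℝ → ℝ) (s : ℝ) : ℝ :=
  -(deriv f s)/s + N^2*(1-a s)^2*f s/s^2 + lam/2*((f s)^2-1)*f s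
    + N*(deriv a s)*f s/s - N*(1-a s)*(deriv f s)/s + N*(1-a s)*f s/s^2

lemma hasDerivAt_congr_deriv {f : ℝ → ℝ} {d d' x : ℝ} (h : HasDerivAt f d x)
    (hd : d = d') : HasDerivAt f d' x := hd ▸ h

lemma second_deriv_test_min {e : ℝ → ℝ} {r₀ L : ℝ}
    (hmin : IsLocalMin e r₀)
    (hdiff : ∀ᶠ r in 𝓝 r₀, DifferentiableAt ℝ e r)
    (hL : HasDerivAt (deriv e) L r₀) : 0 ≤ L := by
  by_contra hneg
  push_neg at hneg
  have h0 : deriv e r₀ = 0 := hmin.deriv_eq_zero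
  have hslope : Tendsto (slope (deriv e) r₀) (𝓝[≠] r₀) (𝓝 L) :=
    hasDerivAt_iff_tendsto_slope.mp hL
  have h1 : ∀ᶠ x in 𝓝[≠] r₀, slope (deriv e) r₀ x < 0 := by
    filter_upwards [hslope.eventually (Iio_mem_nhds hneg)] with x hx
    exact hx
  have h2 : ∀ᶠ x in 𝓝[>] r₀, deriv e x < 0 := by
    have hsub : 𝓝[>] r₀ ≤ 𝓝[≠] r₀ := nhdsWithin_mono _ (fun x hx => ne_of_gt hx)
    filter_upwards [h1.filter_mono hsub, self_mem_nhdsWithin] with x hx hx'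
    have hxr : r₀ < x := hx'
    rw [slope_def_field, h0, sub_zero] at hx
    by_contra hge
    push_neg at hge
    have : 0 ≤ deriv e x / (x - r₀) := div_nonneg hge (by linarith)
    linarith
  obtain ⟨u, hu, husub⟩ := mem_nhdsGT_iff_exists_Ioo_subset.mp h2
  obtain ⟨ε, hε, hball⟩ := Metric.eventually_nhds_iff.mp (hdiff.and hmin)
  have hru : r₀ < u := hu
  set c := min ((r₀ + u)/2) (r₀ + ε/2) with hcdef
  have hc1 : r₀ < c := lt_min (by linarith) (by linarith)
  have hc2 : c < u := lt_of_le_of_lt (min_le_left _ _) (by linarith)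
  have hcle : c ≤ r₀ + ε/2 := min_le_right _ _
  have hcball : ∀ x ∈ Icc r₀ c, dist x r₀ < ε := by
    intro x hx
    rw [Real.dist_eq, abs_lt]
    constructor
    · linarith [hx.1]
    · linarith [hx.2]
  have hanti : StrictAntiOn e (Icc r₀ c) := by
    apply strictAntiOn_of_deriv_neg (convex_Icc _ _)
    · intro x hx
      exact ((hball (hcball x hx)).1).continuousAt.continuousWithinAt
    · intro x hx
      rw [interior_Icc] at hx
      exact husub ⟨hx.1, lt_trans hx.2 hc2⟩
  have h3 : e c < e r₀ :=
    hanti (left_mem_Icc.mpr hc1.le) (right_mem_Icc.mpr hc1.le) hc1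
  have h4 : e r₀ ≤ e c := (hball (hcball c (right_mem_Icc.mpr hc1.le))).2
  linarith

lemma globalPos (E : ℝ → ℝ) (hc : ∀ r ∈ Ioi (0:ℝ), ContinuousAt E r)
    (h0 : Tendsto E (nhdsWithin 0 (Ioi 0)) (nhds 0)) (hi : Tendsto E atTop (nhds 0))
    (hkey : ∀ r ∈ Ioi (0:ℝ), IsLocalMin E r → E r ≤ 0 → False) :
    ∀ r ∈ Ioi (0:ℝ), 0 < E r := by
  intro r hr
  by_contra hle
  push_neg at hle
  by_cases hneg : ∃ r' ∈ Ioi (0:ℝ), E r' < 0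
  · obtain ⟨r', hr', hEr'⟩ := hneg
    have hr'0 : (0:ℝ) < r' := hr'
    have h0' : ∀ᶠ s in 𝓝[>] (0:ℝ), E r'/2 < E s :=
      h0.eventually (eventually_gt_nhds (by linarith))
    have hi' : ∀ᶠ s in atTop, E r'/2 < E s :=
      hi.eventually (eventually_gt_nhds (by linarith))
    obtain ⟨u, hu, husub⟩ := mem_nhdsGT_iff_exists_Ioo_subset.mp h0'
    have hu0 : (0:ℝ) < u := hu
    set ε := min (u/2) (r'/2) with hεdef
    have hε0 : 0 < ε := lt_min (by linarith) (by linarith)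
    have hεu : ε < u := lt_of_le_of_lt (min_le_left _ _) (by linarith)
    have hεr' : ε < r' := lt_of_le_of_lt (min_le_right _ _) (by linarith)
    have hEε : E r'/2 < E ε := husub ⟨hε0, hεu⟩
    obtain ⟨M₀, hM₀⟩ := eventually_atTop.mp hi'
    set M := max M₀ (r' + 1) with hMdef
    have hrM : r' < M := lt_of_lt_of_le (by linarith) (le_max_right _ _)
    have hEM : E r'/2 < E M := hM₀ M (le_max_left _ _)
    have hεM : ε < M := lt_trans hεr' hrM
    have hcontOn : ContinuousOn E (Icc ε M) :=
      fun x hx => (hc x (lt_of_lt_of_le hε0 hx.1)).continuousWithinAt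
    obtain ⟨r₁, hr₁, hr₁min⟩ :=
      isCompact_Icc.exists_isMinOn ⟨r', ⟨hεr'.le, hrM.le⟩⟩ hcontOn
    have hmle : E r₁ ≤ E r' := isMinOn_iff.mp hr₁min r' ⟨hεr'.le, hrM.le⟩
    have h₁ : ε < r₁ := by
      rcases eq_or_lt_of_le hr₁.1 with h | h
      · exfalso; rw [h] at hEε; linarith
      · exact h
    have h₂ : r₁ < M := by
      rcases eq_or_lt_of_le hr₁.2 with h | h
      · exfalso; rw [h] at hmle; linarith
      · exact h
    have hloc : IsLocalMin E r₁ :=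
      Filter.eventually_of_mem (Ioo_mem_nhds h₁ h₂)
        (fun x hx => isMinOn_iff.mp hr₁min x ⟨hx.1.le, hx.2.le⟩)
    exact hkey r₁ (lt_trans hε0 h₁) hloc (by linarith)
  · push_neg at hneg
    have hEr0 : E r = 0 := le_antisymm hle (hneg r hr)
    have hloc : IsLocalMin E r :=
      Filter.eventually_of_mem (isOpen_Ioi.mem_nhds hr)
        (fun x hx => hEr0 ▸ hneg x hx)
    exact hkey r hr hloc (le_of_eq hEr0)

set_option maxHeartbeats 2000000 in
/-- vortex profile estimate. With `e(r) = f'(r) - n(1-a(r))f(r)/r` vanishing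
at `r → 0⁺` and `r → ∞`, one has `e > 0` on `(0,∞)` if `λ < 1`, and `e < 0` if `λ > 1`. -/
theorem stmt1 (n : ℕ) (hn : 0 < n) (lam : ℝ) (hlam : 0 < lam)
    (f a : ℝ → ℝ)
    (hf : ∀ r ∈ Ioi (0:ℝ), ContDiffAt ℝ (⊤ : ℕ∞) f r)
    (ha : ∀ r ∈ Ioi (0:ℝ), ContDiffAt ℝ (⊤ : ℕ∞) a r)
    (hf01 : ∀ r ∈ Ioi (0:ℝ), 0 < f r ∧ f r < 1)
    (ha01 : ∀ r ∈ Ioi (0:ℝ), 0 < a r ∧ a r < 1)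
    (hf' : ∀ r ∈ Ioi (0:ℝ), 0 < deriv f r)
    (ha' : ∀ r ∈ Ioi (0:ℝ), 0 < deriv a r)
    (hode1 : ∀ r ∈ Ioi (0:ℝ),
      -(deriv (deriv f) r) - deriv f r / r
        + (n:ℝ)^2 * (1 - a r)^2 * f r / r^2
        + lam / 2 * ((f r)^2 - 1) * f r = 0)
    (hode2 : ∀ r ∈ Ioi (0:ℝ),
      -(deriv (deriv a) r) + deriv a r / r - (f r)^2 * (1 - a r) = 0)
    (hlim0 : Tendsto (fun s => deriv f s - (n:ℝ) * (1 - a s) * f s / s)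
      (nhdsWithin 0 (Ioi 0)) (nhds 0))
    (hliminf : Tendsto (fun s => deriv f s - (n:ℝ) * (1 - a s) * f s / s)
      atTop (nhds 0)) :
    (lam < 1 → ∀ r ∈ Ioi (0:ℝ), 0 < deriv f r - (n:ℝ) * (1 - a r) * f r / r) ∧
    (1 < lam → ∀ r ∈ Ioi (0:ℝ), deriv f r - (n:ℝ) * (1 - a r) * f r / r < 0) := by
  set N := (n:ℝ) with hN
  set E : ℝ → ℝ := fun s => deriv f s - N * (1 - a s) * f s / s with hEdef
  have hderiv2 : ∀ (g : ℝ → ℝ) (r : ℝ), ContDiffAt ℝ (⊤ : ℕ∞) g r →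
      DifferentiableAt ℝ (deriv g) r := by
    intro g r hg
    have h1 : ContDiffAt ℝ 1 (fderiv ℝ g) r := hg.fderiv_right (by norm_cast)
    have h2 : DifferentiableAt ℝ (fun y => fderiv ℝ g y 1) r :=
      (h1.differentiableAt one_ne_zero).clm_apply (differentiableAt_const 1)
    have h3 : deriv g = fun y => fderiv ℝ g y 1 := by
      funext y; exact (fderiv_apply_one_eq_deriv).symm
    rw [h3]; exact h2
  have hE' : ∀ r ∈ Ioi (0:ℝ), HasDerivAt E (G0fn N lam f a r) r := by
    intro r hr
    have hr0 : (0:ℝ) < r := hr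
    have hrne : r ≠ 0 := ne_of_gt hr0
    have hfd : HasDerivAt f (deriv f r) r := ((hf r hr).differentiableAt (by simp)).hasDerivAt
    have had : HasDerivAt a (deriv a r) r := ((ha r hr).differentiableAt (by simp)).hasDerivAt
    have hf2A : HasDerivAt (deriv f) (deriv (deriv f) r) r := (hderiv2 f r (hf r hr)).hasDerivAt
    have hf2eq : deriv (deriv f) r
        = -(deriv f r / r) + N^2*(1-a r)^2*f r/r^2 + lam/2*((f r)^2-1)*f r := by
      have h := hode1 r hr
      linarith
    refine hasDerivAt_congr_deriv
      (hf2A.sub (((((hasDerivAt_const r (1:ℝ)).sub had).const_mul N).mul hfd).div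
        (hasDerivAt_id' r) hrne)) ?_
    simp only [G0fn, Pi.sub_apply, Pi.mul_apply, Pi.pow_apply, Pi.neg_apply, Pi.div_apply]
    rw [hf2eq]
    field_simp
    ring
  have hG' : ∀ r ∈ Ioi (0:ℝ),
      HasDerivAt (G0fn N lam f a)
      ((f r^2 + deriv f r/f r*(1/r + N*(1-a r)/r) + 1/r^2 + N*(deriv a r)/r + N*(1-a r)/r^2)
          * (deriv f r - N*(1-a r)*f r/r)
        + (lam-1)*(f r)^2*deriv f r
        + (deriv f r/f r - 1/r - N*(1-a r)/r) * G0fn N lam f a r) r := by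
    intro r hr
    have hr0 : (0:ℝ) < r := hr
    have hrne : r ≠ 0 := ne_of_gt hr0
    have hfne : f r ≠ 0 := ne_of_gt (hf01 r hr).1
    have ha2eq : deriv (deriv a) r = deriv a r / r - (f r)^2*(1-a r) := by
      have h := hode2 r hr
      linarith
    have hfd : HasDerivAt f (deriv f r) r := ((hf r hr).differentiableAt (by simp)).hasDerivAt
    have had : HasDerivAt a (deriv a r) r := ((ha r hr).differentiableAt (by simp)).hasDerivAt
    have hf2A : HasDerivAt (deriv f) (deriv (deriv f) r) r := (hderiv2 f r (hf r hr)).hasDerivAt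
    have ha2A : HasDerivAt (deriv a) (deriv (deriv a) r) r := (hderiv2 a r (ha r hr)).hasDerivAt
    have hf2eq : deriv (deriv f) r
        = -(deriv f r / r) + N^2*(1-a r)^2*f r/r^2 + lam/2*((f r)^2-1)*f r := by
      have h := hode1 r hr
      linarith
    have c1 := (hf2A.neg).div (hasDerivAt_id' r) hrne
    have c2 := (((((hasDerivAt_const r (1:ℝ)).sub had).pow 2).const_mul (N^2)).mul hfd).div
      (hasDerivAt_pow 2 r) (pow_ne_zero 2 hrne)
    have c3 := (((hfd.pow 2).sub_const 1).const_mul (lam/2)).mul hfd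
    have c4 := ((ha2A.const_mul N).mul hfd).div (hasDerivAt_id' r) hrne
    have c5 := ((((hasDerivAt_const r (1:ℝ)).sub had).const_mul N).mul hf2A).div
      (hasDerivAt_id' r) hrne
    have c6 := ((((hasDerivAt_const r (1:ℝ)).sub had).const_mul N).mul hfd).div
      (hasDerivAt_pow 2 r) (pow_ne_zero 2 hrne)
    refine hasDerivAt_congr_deriv (((((c1.add c2).add c3).add c4).sub c5).add c6) ?_
    simp only [G0fn, Pi.sub_apply, Pi.mul_apply, Pi.pow_apply, Pi.neg_apply, Pi.div_apply]
    rw [hf2eq, ha2eq]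
    field_simp
    ring
  have hEd : ∀ r ∈ Ioi (0:ℝ), deriv E r = G0fn N lam f a r := fun r hr => (hE' r hr).deriv
  -- positivity of the zeroth-order coefficient
  have hQQ : ∀ r ∈ Ioi (0:ℝ), 0 ≤ f r^2 + deriv f r/f r*(1/r + N*(1-a r)/r) + 1/r^2
      + N*(deriv a r)/r + N*(1-a r)/r^2 := by
    intro r hr
    have hr0 : (0:ℝ) < r := hr
    have hF : 0 < f r := (hf01 r hr).1
    have hF1 : 0 < deriv f r := hf' r hr
    have hA1 : 0 < deriv a r := ha' r hr
    have h1a : 0 < 1 - a r := by linarith [(ha01 r hr).2]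
    have hNn : (0:ℝ) ≤ N := by rw [hN]; positivity
    have t1 : (0:ℝ) ≤ f r^2 := sq_nonneg _
    have t2 : (0:ℝ) ≤ deriv f r/f r*(1/r + N*(1-a r)/r) :=
      mul_nonneg (div_nonneg hF1.le hF.le)
        (add_nonneg (div_nonneg zero_le_one hr0.le)
          (div_nonneg (mul_nonneg hNn h1a.le) hr0.le))
    have t3 : (0:ℝ) ≤ 1/r^2 := div_nonneg zero_le_one (sq_nonneg _)
    have t4 : (0:ℝ) ≤ N*(deriv a r)/r := div_nonneg (mul_nonneg hNn hA1.le) hr0.le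
    have t5 : (0:ℝ) ≤ N*(1-a r)/r^2 := div_nonneg (mul_nonneg hNn h1a.le) (sq_nonneg _)
    linarith
  -- key pointwise lemma at a local minimum
  have hkeymin : ∀ r₀ ∈ Ioi (0:ℝ), IsLocalMin E r₀ → E r₀ ≤ 0 → lam < 1 → False := by
    intro r₀ hr₀ hmin hE0 hlam1
    have hzero : G0fn N lam f a r₀ = 0 := by
      rw [← hEd r₀ hr₀]; exact hmin.deriv_eq_zero
    have heq : deriv E =ᶠ[𝓝 r₀] G0fn N lam f a :=
      Filter.eventuallyEq_of_mem (isOpen_Ioi.mem_nhds hr₀) (fun x hx => hEd x hx)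
    have hL := (hG' r₀ hr₀).congr_of_eventuallyEq heq
    rw [hzero, mul_zero, add_zero] at hL
    have hdiffE : ∀ᶠ r in 𝓝 r₀, DifferentiableAt ℝ E r :=
      Filter.eventually_of_mem (isOpen_Ioi.mem_nhds hr₀)
        (fun x hx => (hE' x hx).differentiableAt)
    have htest := second_deriv_test_min hmin hdiffE hL
    have hF : 0 < f r₀ := (hf01 r₀ hr₀).1
    have hF1 : 0 < deriv f r₀ := hf' r₀ hr₀
    have h1 : (f r₀^2 + deriv f r₀/f r₀*(1/r₀ + N*(1-a r₀)/r₀) + 1/r₀^2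
        + N*(deriv a r₀)/r₀ + N*(1-a r₀)/r₀^2) * E r₀ ≤ 0 :=
      mul_nonpos_of_nonneg_of_nonpos (hQQ r₀ hr₀) hE0
    have h2 : (lam-1)*(f r₀)^2*deriv f r₀ < 0 := by
      have hp : 0 < (f r₀)^2 * deriv f r₀ := mul_pos (pow_pos hF 2) hF1
      nlinarith
    have hE0' : E r₀ = deriv f r₀ - N*(1-a r₀)*f r₀/r₀ := rfl
    rw [← hE0'] at htest
    linarith
  have hkeymax : ∀ r₀ ∈ Ioi (0:ℝ), IsLocalMax E r₀ → 0 ≤ E r₀ → 1 < lam → False := by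
    intro r₀ hr₀ hmax hE0 hlam1
    have hzero : G0fn N lam f a r₀ = 0 := by
      rw [← hEd r₀ hr₀]; exact hmax.deriv_eq_zero
    have heq : deriv E =ᶠ[𝓝 r₀] G0fn N lam f a :=
      Filter.eventuallyEq_of_mem (isOpen_Ioi.mem_nhds hr₀) (fun x hx => hEd x hx)
    have hL := (hG' r₀ hr₀).congr_of_eventuallyEq heq
    rw [hzero, mul_zero, add_zero] at hL
    have hnegderiv : deriv (fun x => -E x) = fun x => -deriv E x :=
      funext (fun x => deriv.neg)
    have hLneg : HasDerivAt (deriv (fun x => -E x))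
        (-((f r₀^2 + deriv f r₀/f r₀*(1/r₀ + N*(1-a r₀)/r₀) + 1/r₀^2
            + N*(deriv a r₀)/r₀ + N*(1-a r₀)/r₀^2) * (deriv f r₀ - N*(1-a r₀)*f r₀/r₀)
          + (lam-1)*(f r₀)^2*deriv f r₀)) r₀ := by
      rw [hnegderiv]; exact hL.neg
    have hdiffE : ∀ᶠ r in 𝓝 r₀, DifferentiableAt ℝ (fun x => -E x) r :=
      Filter.eventually_of_mem (isOpen_Ioi.mem_nhds hr₀)
        (fun x hx => (hE' x hx).differentiableAt.neg)
    have hminneg : IsLocalMin (fun x => -E x) r₀ := by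
      filter_upwards [hmax] with x hx
      exact neg_le_neg hx
    have htest := second_deriv_test_min hminneg hdiffE hLneg
    have hF : 0 < f r₀ := (hf01 r₀ hr₀).1
    have hF1 : 0 < deriv f r₀ := hf' r₀ hr₀
    have h1 : 0 ≤ (f r₀^2 + deriv f r₀/f r₀*(1/r₀ + N*(1-a r₀)/r₀) + 1/r₀^2
        + N*(deriv a r₀)/r₀ + N*(1-a r₀)/r₀^2) * E r₀ :=
      mul_nonneg (hQQ r₀ hr₀) hE0
    have h2 : 0 < (lam-1)*(f r₀)^2*deriv f r₀ := by
      have hp : 0 < (f r₀)^2 * deriv f r₀ := mul_pos (pow_pos hF 2) hF1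
      nlinarith
    have hE0' : E r₀ = deriv f r₀ - N*(1-a r₀)*f r₀/r₀ := rfl
    rw [← hE0'] at htest
    linarith
  have hcont : ∀ r ∈ Ioi (0:ℝ), ContinuousAt E r :=
    fun r hr => (hE' r hr).differentiableAt.continuousAt
  constructor
  · intro hlam1
    exact globalPos E hcont hlim0 hliminf
      (fun r hr hmin hle => hkeymin r hr hmin hle hlam1)
  · intro hlam1
    intro r hr
    have hpos := globalPos (fun s => -E s)
      (fun r hr => (hcont r hr).neg)
      (by simpa using hlim0.neg)
      (by simpa using hliminf.neg)
      (fun r hr hmin hle => by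
        have hmax : IsLocalMax E r := by
          filter_upwards [hmin] with x hx
          exact neg_le_neg_iff.mp hx
        have hE0 : 0 ≤ E r := by simpa using hle
        exact hkeymax r hr hmax hE0 hlam1) r hr
    have : -E r > 0 := hpos
    have : E r < 0 := by linarith
    exact this
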